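/- Let A be a unital C*-algebra and a ∈ A. Then v(a)³ ≤ (1/4)·‖a*a + aa*‖·‖a‖ + (1/4)·‖a²‖·‖a‖ + (1/4)·v(a³). -/

import Mathlib

open scoped ComplexOrder InnerProductSpace

/-- A state on a unital `C*`-algebra: a positive linear functional `φ` (equivalently, since the
algebra is complete, `φ (star b * b) ≥ 0` for all `b`) with `φ 1 = 1`. -/
def IsState {A : Type*} [CStarAlgebra A] (φ : A →ₗ[ℂ] ℂ) : Prop :=
  (∀ b : A, 0 ≤ φ (star b * b)) ∧ φ 1 = 1

/-- The numerical radius of an element of a unital `C*`-algebra: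
`v(a) = sup { |φ(a)| : φ a state on A }`. -/
noncomputable def numRadius {A : Type*} [CStarAlgebra A] (a : A) : ℝ :=
  sSup {r : ℝ | ∃ φ : A →ₗ[ℂ] ℂ, IsState φ ∧ r = ‖φ a‖}

/-!
Fix a state `φ` and put `r = ‖φ a‖`. In the GNS semi-inner product `⟪x, y⟫ = φ (x⋆ y)`, rotate `a`
by a unimodular scalar so that `φ a = r` and apply Cauchy–Schwarz to `1` and `a + a⋆`: this gives
`4 r² ≤ 2 ‖φ (a²)‖ + ‖a⋆a + aa⋆‖`. Buzano's inequality for the unit vector `1` and the vectors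
`a⋆`, `a²` gives `2 r ‖φ (a²)‖ ≤ ‖a‖ ‖a²‖ + ‖φ (a³)‖`. Multiplying the first bound by `r ≤ ‖a‖` and
adding the second yields `4 r³ ≤ ‖a⋆a + aa⋆‖ ‖a‖ + ‖a²‖ ‖a‖ + ‖φ (a³)‖`; take the supremum over `φ`.
-/

lemma Complex.exists_norm_eq_one_mul_eq_norm (z : ℂ) : ∃ u : ℂ, ‖u‖ = 1 ∧ u * z = ‖z‖ := by
  refine ⟨Complex.exp (↑(-z.arg) * Complex.I), Complex.norm_exp_ofReal_mul_I _, ?_⟩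
  conv_lhs => arg 2; rw [← Complex.norm_mul_exp_arg_mul_I z]
  rw [mul_left_comm, ← Complex.exp_add, Complex.ofReal_neg, neg_mul, neg_add_cancel,
    Complex.exp_zero, mul_one]

section InnerProductSpace

variable {E : Type*} [SeminormedAddCommGroup E] [InnerProductSpace ℂ E]

lemma norm_two_mul_inner_smul_sub_self {e : E} (he : ‖e‖ = 1) (y : E) :
    ‖(2 * ⟪e, y⟫_ℂ) • e - y‖ = ‖y‖ := by
  have h := norm_sub_sq (𝕜 := ℂ) ((2 * ⟪e, y⟫_ℂ) • e) y
  have hre : RCLike.re ⟪(2 * ⟪e, y⟫_ℂ) • e, y⟫_ℂ = 2 * ‖⟪e, y⟫_ℂ‖ ^ 2 := by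
    rw [inner_smul_left, map_mul (starRingEnd ℂ), mul_assoc, Complex.conj_mul']
    simp [← Complex.ofReal_pow]
  rw [hre, norm_smul, he, mul_one, norm_mul] at h
  rw [← sq_eq_sq₀ (norm_nonneg _) (norm_nonneg _), h]
  norm_num
  ring

/-- Buzano's inequality: pair `x` with the reflection `(2 * ⟪e, y⟫) • e - y` of `y` across
`ℂ ∙ e`, which has the same norm as `y`. -/
lemma two_mul_norm_inner_mul_inner_le {e : E} (he : ‖e‖ = 1) (x y : E) :
    2 * ‖⟪x, e⟫_ℂ * ⟪e, y⟫_ℂ‖ ≤ ‖x‖ * ‖y‖ + ‖⟪x, y⟫_ℂ‖ := by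
  have h := norm_inner_le_norm (𝕜 := ℂ) x ((2 * ⟪e, y⟫_ℂ) • e - y)
  rw [norm_two_mul_inner_smul_sub_self he, inner_sub_right, inner_smul_right] at h
  calc 2 * ‖⟪x, e⟫_ℂ * ⟪e, y⟫_ℂ‖ = ‖2 * ⟪e, y⟫_ℂ * ⟪x, e⟫_ℂ - ⟪x, y⟫_ℂ + ⟪x, y⟫_ℂ‖ := by
        rw [sub_add_cancel, mul_comm, norm_mul, norm_mul, norm_mul]; norm_num; ring
    _ ≤ _ := (norm_add_le _ _).trans (by gcongr)

end InnerProductSpace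

namespace IsState

variable {A : Type*} [CStarAlgebra A] {φ : A →ₗ[ℂ] ℂ}

-- `CStarAlgebra` carries no order of its own; positivity refers to the spectral order.
attribute [local instance] CStarAlgebra.spectralOrder CStarAlgebra.spectralOrderedRing

noncomputable def toPositiveLinearMap (hφ : IsState φ) : A →ₚ[ℂ] ℂ :=
  PositiveLinearMap.mk₀ φ fun x hx => by
    obtain ⟨b, rfl⟩ := CStarAlgebra.nonneg_iff_eq_star_mul_self.mp hx
    exact hφ.1 b

@[simp]
lemma toPositiveLinearMap_apply (hφ : IsState φ) (x : A) : hφ.toPositiveLinearMap x = φ x := rfl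

lemma map_star (hφ : IsState φ) (x : A) : φ (star x) = star (φ x) :=
  StarHomClass.map_star hφ.toPositiveLinearMap x

lemma norm_apply_le_of_nonneg (hφ : IsState φ) {p : A} (hp : 0 ≤ p) : ‖φ p‖ ≤ ‖p‖ := by
  simpa [hφ.2] using hφ.toPositiveLinearMap.norm_apply_le_of_nonneg p hp

noncomputable def toPreGNS (hφ : IsState φ) (x : A) : hφ.toPositiveLinearMap.PreGNS :=
  hφ.toPositiveLinearMap.toPreGNS x

lemma inner_toPreGNS (hφ : IsState φ) (x y : A) :
    ⟪hφ.toPreGNS x, hφ.toPreGNS y⟫_ℂ = φ (star x * y) :=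
  rfl

lemma norm_toPreGNS_sq (hφ : IsState φ) (x : A) : ‖hφ.toPreGNS x‖ ^ 2 = (φ (star x * x)).re := by
  rw [← RCLike.re_eq_complex_re, ← inner_toPreGNS, inner_self_eq_norm_sq]

lemma norm_toPreGNS_one (hφ : IsState φ) : ‖hφ.toPreGNS 1‖ = 1 := by
  rw [← Real.sqrt_sq (norm_nonneg _), norm_toPreGNS_sq]
  simp [hφ.2]

lemma norm_toPreGNS_le (hφ : IsState φ) (x : A) : ‖hφ.toPreGNS x‖ ≤ ‖x‖ := by
  have h := (hφ.toPositiveLinearMap.leftMulMapPreGNS x).le_opNorm (hφ.toPreGNS 1)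
  rw [norm_toPreGNS_one, mul_one] at h
  have hx : hφ.toPreGNS x = hφ.toPositiveLinearMap.leftMulMapPreGNS x (hφ.toPreGNS 1) := by
    simp [toPreGNS]
  exact hx ▸ h.trans (LinearMap.mkContinuous_norm_le _ (norm_nonneg x) _)

lemma norm_apply_le (hφ : IsState φ) (x : A) : ‖φ x‖ ≤ ‖x‖ := by
  calc ‖φ x‖ = ‖⟪hφ.toPreGNS 1, hφ.toPreGNS x⟫_ℂ‖ := by rw [inner_toPreGNS, star_one, one_mul]
    _ ≤ ‖hφ.toPreGNS 1‖ * ‖hφ.toPreGNS x‖ := norm_inner_le_norm _ _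
    _ ≤ ‖x‖ := by rw [hφ.norm_toPreGNS_one, one_mul]; exact hφ.norm_toPreGNS_le x

lemma two_mul_norm_apply_mul_norm_apply_sq_le (hφ : IsState φ) (a : A) :
    2 * (‖φ a‖ * ‖φ (a ^ 2)‖) ≤ ‖a‖ * ‖a ^ 2‖ + ‖φ (a ^ 3)‖ := by
  have h := two_mul_norm_inner_mul_inner_le hφ.norm_toPreGNS_one (hφ.toPreGNS (star a))
    (hφ.toPreGNS (a ^ 2))
  simp only [inner_toPreGNS, star_star, mul_one, star_one, one_mul, ← pow_succ'] at h
  calc 2 * (‖φ a‖ * ‖φ (a ^ 2)‖) = 2 * ‖φ a * φ (a ^ 2)‖ := by rw [norm_mul]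
    _ ≤ ‖hφ.toPreGNS (star a)‖ * ‖hφ.toPreGNS (a ^ 2)‖ + ‖φ (a ^ 3)‖ := h
    _ ≤ ‖a‖ * ‖a ^ 2‖ + ‖φ (a ^ 3)‖ := by
      gcongr
      · exact (hφ.norm_toPreGNS_le _).trans (norm_star a).le
      · exact hφ.norm_toPreGNS_le _

lemma four_mul_re_apply_sq_le (hφ : IsState φ) (b : A) :
    4 * (φ b).re ^ 2 ≤ 2 * (φ (b ^ 2)).re + (φ (star b * b + b * star b)).re := by
  set x := b + star b
  have hx : ⟪hφ.toPreGNS 1, hφ.toPreGNS x⟫_ℂ = 2 * (φ b).re := by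
    rw [inner_toPreGNS, star_one, one_mul, map_add, hφ.map_star, Complex.star_def,
      Complex.add_conj]
    push_cast; ring
  have hxx : star x * x = b ^ 2 + star (b ^ 2) + (star b * b + b * star b) := by
    simp only [x, sq, star_add, star_star, star_mul, add_mul, mul_add]
    abel
  have h := norm_inner_le_norm (𝕜 := ℂ) (hφ.toPreGNS 1) (hφ.toPreGNS x)
  rw [hφ.norm_toPreGNS_one, one_mul, hx, ← sq_le_sq₀ (by positivity) (by positivity),
    norm_toPreGNS_sq, hxx, map_add, map_add, Complex.add_re, Complex.add_re, hφ.map_star,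
    Complex.star_def, Complex.conj_re] at h
  simp only [norm_mul, Complex.norm_ofNat, Complex.norm_real, Real.norm_eq_abs, mul_pow,
    sq_abs] at h
  linarith

lemma four_mul_norm_apply_sq_le (hφ : IsState φ) (a : A) :
    4 * ‖φ a‖ ^ 2 ≤ 2 * ‖φ (a ^ 2)‖ + ‖star a * a + a * star a‖ := by
  obtain ⟨u, hu, hua⟩ := (φ a).exists_norm_eq_one_mul_eq_norm
  have hunit : star u * u = 1 := by
    rw [Complex.star_def, Complex.conj_mul', hu]; simp
  have hsum : star (u • a) * (u • a) + u • a * star (u • a) = star a * a + a * star a := by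
    simp only [star_smul, smul_mul_smul_comm, hunit, mul_comm u (star u), one_smul]
  have h := hφ.four_mul_re_apply_sq_le (u • a)
  rw [map_smul, smul_eq_mul, hua, Complex.ofReal_re, hsum] at h
  have hsq : (φ ((u • a) ^ 2)).re ≤ ‖φ (a ^ 2)‖ := by
    rw [smul_pow, map_smul, smul_eq_mul]
    exact (Complex.re_le_norm _).trans (by rw [norm_mul, norm_pow, hu, one_pow, one_mul])
  have hpos : (φ (star a * a + a * star a)).re ≤ ‖star a * a + a * star a‖ :=
    (Complex.re_le_norm _).trans <|
      hφ.norm_apply_le_of_nonneg (add_nonneg (star_mul_self_nonneg a) (mul_star_self_nonneg a))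
  linarith

lemma four_mul_norm_apply_cube_le (hφ : IsState φ) (a : A) :
    4 * ‖φ a‖ ^ 3 ≤ ‖star a * a + a * star a‖ * ‖a‖ + ‖a ^ 2‖ * ‖a‖ + ‖φ (a ^ 3)‖ := by
  have hsq := hφ.four_mul_norm_apply_sq_le a
  have hbuzano := hφ.two_mul_norm_apply_mul_norm_apply_sq_le a
  have ha := hφ.norm_apply_le a
  calc 4 * ‖φ a‖ ^ 3 = ‖φ a‖ * (4 * ‖φ a‖ ^ 2) := by ring
    _ ≤ ‖φ a‖ * (2 * ‖φ (a ^ 2)‖ + ‖star a * a + a * star a‖) := by gcongr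
    _ = 2 * (‖φ a‖ * ‖φ (a ^ 2)‖) + ‖star a * a + a * star a‖ * ‖φ a‖ := by ring
    _ ≤ ‖a‖ * ‖a ^ 2‖ + ‖φ (a ^ 3)‖ + ‖star a * a + a * star a‖ * ‖a‖ := by gcongr
    _ = _ := by ring

lemma norm_apply_le_numRadius (hφ : IsState φ) (a : A) : ‖φ a‖ ≤ numRadius a :=
  le_csSup ⟨‖a‖, by rintro _ ⟨ψ, hψ, rfl⟩; exact hψ.norm_apply_le a⟩ ⟨φ, hφ, rfl⟩

end IsState

lemma numRadius_nonneg {A : Type*} [CStarAlgebra A] (a : A) : 0 ≤ numRadius a :=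
  Real.sSup_nonneg <| by rintro _ ⟨φ, -, rfl⟩; exact norm_nonneg _

lemma numRadius_pow_le_of_forall {A : Type*} [CStarAlgebra A] {a : A} {n : ℕ} (hn : n ≠ 0)
    {M : ℝ} (hM : 0 ≤ M) (h : ∀ φ : A →ₗ[ℂ] ℂ, IsState φ → ‖φ a‖ ^ n ≤ M) :
    numRadius a ^ n ≤ M := by
  have hroot : numRadius a ≤ M ^ (n⁻¹ : ℝ) := by
    refine Real.sSup_le ?_ (Real.rpow_nonneg hM _)
    rintro _ ⟨φ, hφ, rfl⟩
    rw [← pow_le_pow_iff_left₀ (norm_nonneg _) (Real.rpow_nonneg hM _) hn,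
      Real.rpow_inv_natCast_pow hM hn]
    exact h φ hφ
  calc numRadius a ^ n ≤ (M ^ (n⁻¹ : ℝ)) ^ n := pow_le_pow_left₀ (numRadius_nonneg a) hroot n
    _ = M := Real.rpow_inv_natCast_pow hM hn

/-- Corollary 2.11:
`v(a)³ ≤ (1/4)·‖a*a + aa*‖·‖a‖ + (1/4)·‖a²‖·‖a‖ + (1/4)·v(a³)`. -/
theorem numRadius_cube_le_quarter
    {A : Type*} [CStarAlgebra A] (a : A) :
    numRadius a ^ 3 ≤
      (1 / 4) * ‖star a * a + a * star a‖ * ‖a‖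
        + (1 / 4) * ‖a ^ 2‖ * ‖a‖ + (1 / 4) * numRadius (a ^ 3) := by
  have hv : 0 ≤ numRadius (a ^ 3) := numRadius_nonneg _
  refine numRadius_pow_le_of_forall three_ne_zero (by positivity) fun φ hφ => ?_
  have hcube := hφ.four_mul_norm_apply_cube_le a
  have hv3 := hφ.norm_apply_le_numRadius (a ^ 3)
  linarith
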